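/- arXiv:2501.00809 — 4 statements merged into one kernel-verified Lean document; each statement's English description precedes it below -/
import Mathlib

section
/- Fix an integer m ≥ 2 and an integer w with 3(m−1) ≤ w ≤ 6m−9, and set δ_w = 6m−9−w. Let 𝓜^T_w be the set of v = (i,j,k) ∈ ℕ³ with i+2j+3k−3m = w, i+j ≤ 3(m−1), i+j+k ≥ 3m−2, and t_𝓜(v) ≥ τ_w+1. Then: (1) there exists v ∈ 𝓜^T_w with second coordinate j(v) = j if and only if j ∈ ℕ satisfies j + 2η(j−w) ≤ δ_w + 2η(w) − 3; (2) given such a j, there exists v ∈ 𝓜^T_w with j(v) = j and first coordinate i(v) = i if and only if i ∈ ℕ is congruent to j+w modulo 3 and satisfies (δ_w+3−j+3ε(w+j))/2 ≤ i ≤ δ_w+η(w)−j−η(j−w). -/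
/-!
Given `i` and `j`, the weight fixes `3k = w + 3m - i - 2j`, so membership in `𝓜^T_w` is a
condition on `(i, j)` alone: `i ≡ j + w (mod 3)`, the bound `i + j + k ≥ 3m - 2` becomes
`2i + j ≥ δ_w + 3`, and the threshold `t_𝓜 ≥ τ_w + 1` becomes `i + j ≤ δ_w + η(w)`; the other
constraints then follow from `w ≥ 3(m - 1)`. Rounding both bounds into the residue class of
`j + w` gives the range of `i`, and `j` occurs exactly when that range is nonempty.
-/

open Finset

abbrev V : Type := ℤ × ℤ × ℤ

/-- weight of a monomial `(a,b,c)`, i.e. `a + 2b + 3c` -/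
def wtR (u : V) : ℤ := u.1 + 2 * u.2.1 + 3 * u.2.2

/-- the `𝓜`-weight of `(i,j,k)`, i.e. `i + 2j + 3k - 3m` -/
def wtM (m : ℤ) (v : V) : ℤ := v.1 + 2 * v.2.1 + 3 * v.2.2 - 3 * m

/-- `t_𝓡 (a,b,c) = ⌊c/2⌋` -/
def tR (u : V) : ℤ := u.2.2 / 2

/-- `t_𝓜 (i,j,k) = ⌊(3(m-1)-i-j)/3⌋` -/
def tM (m : ℤ) (v : V) : ℤ := (3 * (m - 1) - v.1 - v.2.1) / 3

/-- the threshold number `τ_w = ⌊w/3⌋ - (m-1)` -/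
def tauW (m w : ℤ) : ℤ := w / 3 - (m - 1)

/-- `δ_w = 6m - 9 - w` -/
def deltaW (m w : ℤ) : ℤ := 6 * m - 9 - w

/-- `ε(n)`: residue of `n` mod 2, in `{0,1}` -/
def epsZ (n : ℤ) : ℤ := n % 2

/-- `η(n)`: residue of `n` mod 3, in `{0,1,2}` -/
def etaZ (n : ℤ) : ℤ := n % 3

/-- `ρ(n)`: the representative of `n` mod 6 lying in `{-6,-4,-3,-2,-1,1}` -/
def rhoZ (n : ℤ) : ℤ := if n % 6 = 1 then 1 else n % 6 - 6

/-- `λ(n) = (n - ρ(n))/6` -/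
def lamZ (n : ℤ) : ℤ := (n - rhoZ n) / 6

/-- `q_h = (0, 3h, m - 2h)` -/
def qvec (m h : ℤ) : V := (0, 3 * h, m - 2 * h)

def e1v : V := (1, 1, -1)

def e2v : V := (0, 3, -2)

/-- `u` has non-negative coordinates (i.e. `u ∈ ℕ³`) -/
def nonnegV (u : V) : Prop := 0 ≤ u.1 ∧ 0 ≤ u.2.1 ∧ 0 ≤ u.2.2

/-- `𝓡 = {(a,b,c) ∈ ℕ³ : a + b ≤ 3(m-1)}` -/
def Rfull (m : ℤ) : Set V := {u | nonnegV u ∧ u.1 + u.2.1 ≤ 3 * (m - 1)}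

/-- `𝓜 = {(i,j,k) ∈ ℕ³ : i + j ≤ 3(m-1), i + j + k ≥ 3m - 2}` -/
def Mfull (m : ℤ) : Set V :=
  {v | nonnegV v ∧ v.1 + v.2.1 ≤ 3 * (m - 1) ∧ 3 * m - 2 ≤ v.1 + v.2.1 + v.2.2}

/-- `𝓡' = {(a,b,c) ∈ ℕ³ : 2a + 2b + 3c ≤ 6m - 9}` -/
def Rprime (m : ℤ) : Set V := {u | nonnegV u ∧ 2 * u.1 + 2 * u.2.1 + 3 * u.2.2 ≤ 6 * m - 9}

/-- `𝓜' = {(i,j,k) ∈ ℕ³ : 2i+2j+3k ≤ 9(m-1), i+j ≤ 3(m-1), i+j+k ≥ 3m-2}` -/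
def Mprime (m : ℤ) : Set V :=
  {v | nonnegV v ∧ 2 * v.1 + 2 * v.2.1 + 3 * v.2.2 ≤ 9 * (m - 1) ∧
    v.1 + v.2.1 ≤ 3 * (m - 1) ∧ 3 * m - 2 ≤ v.1 + v.2.1 + v.2.2}

/-- the rectangular region `𝓡^▭` -/
def Rrect (m : ℤ) : Set V := {u ∈ Rprime m | tR u ≤ tauW m (wtR u)}

/-- the rectangular region `𝓜^▭` -/
def Mrect (m : ℤ) : Set V := {v ∈ Mprime m | tM m v ≤ tauW m (wtM m v)}

/-- the triangular region `𝓡^△ = 𝓡' ∖ 𝓡^▭` -/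
def Rtri (m : ℤ) : Set V := {u ∈ Rprime m | tauW m (wtR u) + 1 ≤ tR u}

/-- the triangular region `𝓜^△ = 𝓜' ∖ 𝓜^▭` -/
def Mtri (m : ℤ) : Set V := {v ∈ Mprime m | tauW m (wtM m v) + 1 ≤ tM m v}

/-- the extended triangular region `𝓡^T` -/
def RText (m : ℤ) : Set V := {u | nonnegV u ∧ tauW m (wtR u) + 1 ≤ tR u}

/-- the extended triangular region `𝓜^T` -/
def MText (m : ℤ) : Set V := {v ∈ Mfull m | tauW m (wtM m v) + 1 ≤ tM m v}

/-- the bijection `φ^▭ (u) = u + q_{λ(u)}` on the rectangular region -/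
def phiRect (m : ℤ) (u : V) : V := u + qvec m (lamZ (deltaW m (wtR u) - u.1))

/-- the parametrization `u^△ (w,r,s)` of the extended triangular region `𝓡^T` -/
def uTri (d : V) : V :=
  (3 * d.2.2 + etaZ (d.1 + d.2.1), d.2.1,
    (d.1 - 2 * d.2.1 - 3 * d.2.2 - etaZ (d.1 + d.2.1)) / 3)

/-- the parametrization `v^△ (w,r,s)` of the extended triangular region `𝓜^T` -/
def vTri (m : ℤ) (d : V) : V :=
  ((6 * (m - 1) - d.1 - 2 * d.2.1 + 3 * d.2.2 - epsZ (d.1 + d.2.2)) / 2,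
    2 * d.2.1 + epsZ (d.1 + d.2.2),
    (d.1 - 2 * d.2.1 - d.2.2 + 2 - epsZ (d.1 + d.2.2)) / 2)

/-- `𝓓 = {(w,r,s) ∈ ℕ³ : 2r + 3s ≤ w}` -/
def Dall : Set V := {d | nonnegV d ∧ 2 * d.2.1 + 3 * d.2.2 ≤ d.1}

/-- `t_𝓓 (w,r,s) = ⌊(w - 2r - 3s)/6⌋` -/
def tD (d : V) : ℤ := (d.1 - 2 * d.2.1 - 3 * d.2.2) / 6

/-- `𝓓^T = {d ∈ 𝓓 : t_𝓓(d) ≥ τ_w + 1}` -/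
def DText (m : ℤ) : Set V := {d ∈ Dall | tauW m d.1 + 1 ≤ tD d}

/-- explicit formula for `φ^△ = v^△ ∘ (u^△)⁻¹`: for `u = (a,b,c) ∈ 𝓡^T` the unique
`(w,r,s) ∈ 𝓓^T` with `u^△(w,r,s) = u` is `(wt(u), b, ⌊a/3⌋)`. -/
def phiTri (m : ℤ) (u : V) : V := vTri m (wtR u, u.2.1, u.1 / 3)

/-- the glued bijection `φ`: `φ^▭` on `𝓡^▭` and `φ^△` on `𝓡^△` -/
def phiW (m : ℤ) (u : V) : V :=
  if tR u ≤ tauW m (wtR u) then phiRect m u else phiTri m u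

noncomputable def boxF (N : ℤ) : Finset V := Finset.Icc 0 N ×ˢ (Finset.Icc 0 N ×ˢ Finset.Icc 0 N)

/-- `𝓡_w` as a finset -/
noncomputable def RfullWF (m w : ℤ) : Finset V :=
  (boxF w).filter fun u => u.1 + u.2.1 ≤ 3 * (m - 1) ∧ wtR u = w

/-- `𝓜_w` as a finset -/
noncomputable def MfullWF (m w : ℤ) : Finset V :=
  (boxF (w + 3 * m)).filter fun v =>
    v.1 + v.2.1 ≤ 3 * (m - 1) ∧ 3 * m - 2 ≤ v.1 + v.2.1 + v.2.2 ∧ wtM m v = w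

/-- `𝓡'_w` as a finset -/
noncomputable def RprimeWF (m w : ℤ) : Finset V :=
  (boxF w).filter fun u => 2 * u.1 + 2 * u.2.1 + 3 * u.2.2 ≤ 6 * m - 9 ∧ wtR u = w

/-- `𝓜'_w` as a finset -/
noncomputable def MprimeWF (m w : ℤ) : Finset V :=
  (boxF (w + 3 * m)).filter fun v =>
    2 * v.1 + 2 * v.2.1 + 3 * v.2.2 ≤ 9 * (m - 1) ∧ v.1 + v.2.1 ≤ 3 * (m - 1) ∧
      3 * m - 2 ≤ v.1 + v.2.1 + v.2.2 ∧ wtM m v = w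

/-- `𝓡^▭_w` as a finset -/
noncomputable def RrectWF (m w : ℤ) : Finset V := (RprimeWF m w).filter fun u => tR u ≤ tauW m w

/-- `𝓜^▭_w` as a finset -/
noncomputable def MrectWF (m w : ℤ) : Finset V := (MprimeWF m w).filter fun v => tM m v ≤ tauW m w

/-- `𝓡^△_w` as a finset -/
noncomputable def RtriWF (m w : ℤ) : Finset V := (RprimeWF m w).filter fun u => tauW m w + 1 ≤ tR u

/-- `𝓜^△_w` as a finset -/
noncomputable def MtriWF (m w : ℤ) : Finset V := (MprimeWF m w).filter fun v => tauW m w + 1 ≤ tM m v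

/-- `λ(u) = λ(δ_w - a(u))` -/
def lamU (m w : ℤ) (u : V) : ℤ := lamZ (deltaW m w - u.1)

/-- the order `≺` on `𝓡^▭_w` -/
def precR (m w : ℤ) (u u' : V) : Prop :=
  lamU m w u < lamU m w u' ∨
    (lamU m w u = lamU m w u' ∧ u'.1 < u.1) ∨
      (lamU m w u = lamU m w u' ∧ u.1 = u'.1 ∧ tR u < tR u')

/-- the order `≺` on `𝓜^▭_w` -/
def precM (m w : ℤ) (v v' : V) : Prop :=
  lamU m w v < lamU m w v' ∨
    (lamU m w v = lamU m w v' ∧ v'.1 < v.1) ∨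
      (lamU m w v = lamU m w v' ∧ v.1 = v'.1 ∧ tM m v < tM m v')

/-- the bijection `φ̂_{ℓ₀} : 𝓑 → 𝓒` on the abstract special block;
on `𝓑`, points are `u⁰_ℓ = (0, 3ℓ, -2ℓ)` and `u¹_ℓ = (1, 3ℓ+1, -2ℓ-1)`. -/
def phiHatB (m n l0 : ℤ) (u : V) : V :=
  if u.1 = 0 then
    if u.2.1 / 3 < l0 then (0, 3 * (n + u.2.1 / 3 + 1), m - 2 * (n + u.2.1 / 3 + 1))
    else if u.2.1 / 3 = l0 then (1, 3 * (n + l0) + 1, m - 2 * (n + l0) - 1)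
    else (0, 3 * (n + u.2.1 / 3), m - 2 * (n + u.2.1 / 3))
  else
    if (u.2.1 - 1) / 3 < l0 then
      (1, 3 * (n + (u.2.1 - 1) / 3) + 1, m - 2 * (n + (u.2.1 - 1) / 3) - 1)
    else (1, 3 * (n + (u.2.1 - 1) / 3 + 1) + 1, m - 2 * (n + (u.2.1 - 1) / 3 + 1) - 1)

/-- the abstract special block `𝓑`: `u⁰_ℓ = ℓ·e₂` for `0 ≤ ℓ ≤ τ+1`,
`u¹_ℓ = e₁ + ℓ·e₂` for `0 ≤ ℓ ≤ τ` -/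
def BblockF (t : ℕ) : Finset V :=
  ((Finset.range (t + 2)).image fun l : ℕ => ((0 : ℤ), 3 * (l : ℤ), -2 * (l : ℤ))) ∪
    ((Finset.range (t + 1)).image fun l : ℕ => ((1 : ℤ), 3 * (l : ℤ) + 1, -2 * (l : ℤ) - 1))

/-- the abstract special block `𝓒`: `v⁰_ℓ = (0,0,m) + (n+ℓ)·e₂` for `1 ≤ ℓ ≤ τ+1`,
`v¹_ℓ = (0,0,m) + e₁ + (n+ℓ)·e₂` for `0 ≤ ℓ ≤ τ+1` -/
def CblockF (m n t : ℕ) : Finset V :=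
  ((Finset.Icc 1 (t + 1)).image fun l : ℕ =>
      ((0 : ℤ), 3 * ((n : ℤ) + (l : ℤ)), (m : ℤ) - 2 * ((n : ℤ) + (l : ℤ)))) ∪
    ((Finset.range (t + 2)).image fun l : ℕ =>
      ((1 : ℤ), 3 * ((n : ℤ) + (l : ℤ)) + 1, (m : ℤ) - 2 * ((n : ℤ) + (l : ℤ)) - 1))

/-- `δ_{w,n} = δ_w - 6n` -/
def deltaWN (m w n : ℤ) : ℤ := deltaW m w - 6 * n

/-- `n_max = ⌊(6m - 9 - w)/6⌋` -/
def nmaxZ (m w : ℤ) : ℤ := (6 * m - 9 - w) / 6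

/-- the special block `𝓑_n ⊆ 𝓡'_w` -/
def Bblock (m w n : ℤ) : Set V :=
  {u ∈ Rprime m | wtR u = w ∧ (u.1 = deltaWN m w n ∨ u.1 = deltaWN m w n - 1) ∧
    3 * n - 1 + etaZ w ≤ u.2.1}

/-- the special block `𝓒_n ⊆ 𝓜'_w` -/
def Cblock (m w n : ℤ) : Set V :=
  {v ∈ Mprime m | wtM m v = w ∧ (v.1 = deltaWN m w n ∨ v.1 = deltaWN m w n - 1) ∧
    6 * n + 2 ≤ v.2.1}

/-- the corner monomial `u⁰_{n,0} = (δ_{w,n}-1, 3n-1+η(w), c_w)` of `𝓑_n` -/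
def cornerB (m w n : ℤ) : V := (deltaWN m w n - 1, 3 * n - 1 + etaZ w, 2 * (tauW m w + 1))

/-- `𝓜^T_w`: elements of the extended triangular region of `𝓜`-weight `w` -/
def MTw (m w : ℤ) : Set V := {v ∈ MText m | wtM m v = w}

lemma tauW_add_one_le_tM_iff (m w : ℤ) (v : V) :
    tauW m w + 1 ≤ tM m v ↔ v.1 + v.2.1 ≤ deltaW m w + etaZ w := by
  simp only [tauW, tM, deltaW, etaZ]
  omega

lemma exists_mem_MTw_iff {m w : ℤ} (hw : 3 * (m - 1) ≤ w) (i j : ℤ) :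
    (∃ v ∈ MTw m w, v.2.1 = j ∧ v.1 = i) ↔
      0 ≤ i ∧ 0 ≤ j ∧ i % 3 = (j + w) % 3 ∧
        deltaW m w + 3 ≤ 2 * i + j ∧ i + j ≤ deltaW m w + etaZ w := by
  constructor
  · rintro ⟨⟨i, j, k⟩, ⟨⟨⟨⟨hi, hj, hk⟩, -, hsum⟩, htau⟩, hwt⟩, rfl, rfl⟩
    rw [hwt, tauW_add_one_le_tM_iff] at htau
    simp only [wtM, deltaW, etaZ] at *
    omega
  · rintro ⟨hi, hj, hmod, hlow, hhigh⟩
    set k := (w + 3 * m - i - 2 * j) / 3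
    have hwt : wtM m (i, j, k) = w := by
      simp only [wtM, k]
      omega
    have htau : tauW m (wtM m (i, j, k)) + 1 ≤ tM m (i, j, k) := by
      rwa [hwt, tauW_add_one_le_tM_iff]
    refine ⟨(i, j, k), ⟨⟨⟨⟨hi, hj, ?_⟩, ?_, ?_⟩, htau⟩, hwt⟩, rfl, rfl⟩
    all_goals simp only [deltaW, etaZ, k] at hlow hhigh ⊢
    all_goals omega

lemma le_sub_emod_iff_le {n a b : ℤ} (hn : 0 < n) (h : a % n = b % n) (c : ℤ) :
    a ≤ c - (c - b) % n ↔ a ≤ c := by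
  refine ⟨fun hac => hac.trans (sub_le_self _ (Int.emod_nonneg _ hn.ne')), fun hac => ?_⟩
  have hmod : a ≡ c - (c - b) % n [ZMOD n] := calc
    a ≡ b [ZMOD n] := h
    _ = c - (c - b) := by ring
    _ ≡ c - (c - b) % n [ZMOD n] := ((Int.mod_modEq _ n).sub_left c).symm
  obtain ⟨q, hq⟩ := hmod.dvd
  have hlt : (c - b) % n < n := Int.emod_lt_of_pos _ hn
  have hq_nonneg : 0 ≤ q := by
    by_contra! hneg
    nlinarith
  nlinarith

lemma add_le_deltaW_add_etaZ_iff {m w i j : ℤ} (h : i % 3 = (j + w) % 3) :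
    i + j ≤ deltaW m w + etaZ w ↔ i ≤ deltaW m w + etaZ w - j - etaZ (j - w) := by
  have hres : (deltaW m w + etaZ w - j - (j + w)) % 3 = etaZ (j - w) := by
    simp only [deltaW, etaZ]
    omega
  rw [← le_sub_iff_add_le, ← le_sub_emod_iff_le (by norm_num) h, hres]

/-- `2i - (δ_w + 3 - j)` is divisible by `3`, and it is odd exactly when `w + j` is. -/
lemma deltaW_add_three_le_iff {m w i j : ℤ} (h : i % 3 = (j + w) % 3) :
    deltaW m w + 3 ≤ 2 * i + j ↔ (deltaW m w + 3 - j + 3 * epsZ (w + j)) / 2 ≤ i := by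
  simp only [deltaW, epsZ]
  omega

lemma exists_mem_MTw_fst_snd_iff {m w : ℤ} (hw : 3 * (m - 1) ≤ w) {j : ℤ} (hj : 0 ≤ j) (i : ℤ) :
    (∃ v ∈ MTw m w, v.2.1 = j ∧ v.1 = i) ↔
      0 ≤ i ∧ i % 3 = (j + w) % 3 ∧ (deltaW m w + 3 - j + 3 * epsZ (w + j)) / 2 ≤ i ∧
        i ≤ deltaW m w + etaZ w - j - etaZ (j - w) := by
  rw [exists_mem_MTw_iff hw]
  constructor
  · rintro ⟨hi, -, hmod, hlow, hhigh⟩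
    exact ⟨hi, hmod, (deltaW_add_three_le_iff hmod).1 hlow,
      (add_le_deltaW_add_etaZ_iff hmod).1 hhigh⟩
  · rintro ⟨hi, hmod, hlow, hhigh⟩
    exact ⟨hi, hj, hmod, (deltaW_add_three_le_iff hmod).2 hlow,
      (add_le_deltaW_add_etaZ_iff hmod).2 hhigh⟩

lemma exists_mem_MTw_snd_iff {m w : ℤ} (hw : 3 * (m - 1) ≤ w) {j : ℤ} (hj : 0 ≤ j) :
    (∃ v ∈ MTw m w, v.2.1 = j) ↔ j + 2 * etaZ (j - w) ≤ deltaW m w + 2 * etaZ w - 3 := by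
  have hrange : (∃ v ∈ MTw m w, v.2.1 = j) ↔ ∃ i, ∃ v ∈ MTw m w, v.2.1 = j ∧ v.1 = i :=
    ⟨fun ⟨v, hv, hvj⟩ => ⟨v.1, v, hv, hvj, rfl⟩, fun ⟨_, v, hv, hvj, _⟩ => ⟨v, hv, hvj⟩⟩
  simp only [hrange, exists_mem_MTw_fst_snd_iff hw hj]
  constructor
  · rintro ⟨i, -, hmod, hlow, hhigh⟩
    simp only [deltaW, etaZ, epsZ] at hmod hlow hhigh ⊢
    omega
  · intro hcond
    refine ⟨deltaW m w + etaZ w - j - etaZ (j - w), ?_, ?_, ?_, le_rfl⟩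
    all_goals simp only [deltaW, etaZ, epsZ] at hcond ⊢
    all_goals omega

theorem ij_triangle_general (m w : ℤ) (hw1 : 3 * (m - 1) ≤ w) :
    (∀ j : ℤ, 0 ≤ j →
      ((∃ v ∈ MTw m w, v.2.1 = j) ↔
        j + 2 * etaZ (j - w) ≤ deltaW m w + 2 * etaZ w - 3)) ∧
    ∀ j : ℤ, 0 ≤ j → j + 2 * etaZ (j - w) ≤ deltaW m w + 2 * etaZ w - 3 →
      ∀ i : ℤ,
        ((∃ v ∈ MTw m w, v.2.1 = j ∧ v.1 = i) ↔
          (0 ≤ i ∧ i % 3 = (j + w) % 3 ∧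
            (deltaW m w + 3 - j + 3 * epsZ (w + j)) / 2 ≤ i ∧
            i ≤ deltaW m w + etaZ w - j - etaZ (j - w))) :=
  ⟨fun _ hj => exists_mem_MTw_snd_iff hw1 hj,
    fun _ hj _ => exists_mem_MTw_fst_snd_iff hw1 hj⟩

/-- **Lemma `ijtriangle`.** Description of the possible pairs `(i,j)` of first
coordinates of elements of `𝓜^T_w`. -/
theorem ij_triangle (m w : ℤ) (hm : 2 ≤ m) (hw1 : 3 * (m - 1) ≤ w) (hw2 : w ≤ 6 * m - 9) :
    (∀ j : ℤ, 0 ≤ j →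
      ((∃ v ∈ MTw m w, v.2.1 = j) ↔
        j + 2 * etaZ (j - w) ≤ deltaW m w + 2 * etaZ w - 3)) ∧
    ∀ j : ℤ, 0 ≤ j → j + 2 * etaZ (j - w) ≤ deltaW m w + 2 * etaZ w - 3 →
      ∀ i : ℤ,
        ((∃ v ∈ MTw m w, v.2.1 = j ∧ v.1 = i) ↔
          (0 ≤ i ∧ i % 3 = (j + w) % 3 ∧
            (deltaW m w + 3 - j + 3 * epsZ (w + j)) / 2 ≤ i ∧
            i ≤ deltaW m w + etaZ w - j - etaZ (j - w))) :=
  ij_triangle_general m w hw1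
end

section
/- Fix an integer m ≥ 2 and (w,r,s) ∈ 𝓓^T. Write (a,b,c) = u^△(w,r,s), (a',b',c') = v^△(w,r,s) − u^△(w,r,s), and t = t_𝓓((w,r,s)). Then a' = 3(t−τ_w−1) + h(a,c) + 2 − η(w), where h(a,c) = (2+3ε(c)−η(a)−ε(c+η(a)))/2. Moreover h(a,c) ∈ {0,1,2} and depends only on η(a) and ε(c): h = 0 if (η(a),ε(c)) ∈ {(1,0),(2,0)}, h = 1 if (η(a),ε(c)) ∈ {(0,0),(2,1)}, and h = 2 if (η(a),ε(c)) ∈ {(0,1),(1,1)}. -/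
open Finset

/-!
Write `(a, b, c) = u^△(w,r,s)`, `e = η(a) = η(w + r)` and `N = w - 2r - 3s`. Since `w - 2r ≡ w + r`
modulo 3 we have `N = 3c + e`, hence `t_𝓓 = ⌊N/6⌋ = ⌊c/2⌋`; and since `N ≡ w + s` modulo 2, the first
coordinate of `v^△` is exactly `3(m-1) - w + ⌊N/2⌋ + 3s`. Both sides of the formula for `a'` thus
reduce to `⌊(3c + e)/2⌋ - e = 3⌊c/2⌋ + ⌊(2 + 3ε(c) - e)/2⌋ - 1`, which follows from
`c = 2⌊c/2⌋ + ε(c)`. In `h(a,c)` the term `ε(c + η(a))` only makes the numerator even, so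
`h(a,c) = ⌊(2 + 3ε(c) - η(a))/2⌋`, and the table is read off from this.
-/

/-- The coefficient `h(a,c)` of the paper. -/
def hCoeff (a c : ℤ) : ℤ := (2 + 3 * epsZ c - etaZ a - epsZ (c + etaZ a)) / 2

theorem hCoeff_eq_div_two (a c : ℤ) : hCoeff a c = (2 + 3 * epsZ c - etaZ a) / 2 := by
  unfold hCoeff epsZ etaZ
  omega

theorem hCoeff_table (a c : ℤ) :
    (hCoeff a c = 0 ∨ hCoeff a c = 1 ∨ hCoeff a c = 2) ∧
    (etaZ a = 1 ∧ epsZ c = 0 → hCoeff a c = 0) ∧ (etaZ a = 2 ∧ epsZ c = 0 → hCoeff a c = 0) ∧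
    (etaZ a = 0 ∧ epsZ c = 0 → hCoeff a c = 1) ∧ (etaZ a = 2 ∧ epsZ c = 1 → hCoeff a c = 1) ∧
    (etaZ a = 0 ∧ epsZ c = 1 → hCoeff a c = 2) ∧ (etaZ a = 1 ∧ epsZ c = 1 → hCoeff a c = 2) := by
  rw [hCoeff_eq_div_two]
  unfold epsZ etaZ
  omega

theorem three_mul_add_div_two_sub (c e : ℤ) :
    (3 * c + e) / 2 - e = 3 * (c / 2) + (2 + 3 * epsZ c - e) / 2 - 1 := by
  unfold epsZ
  omega

theorem three_mul_tauW (m w : ℤ) : 3 * tauW m w = w - etaZ w - 3 * (m - 1) := by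
  unfold tauW etaZ
  omega

section uTri

variable (d : V)

theorem etaZ_uTri_fst : etaZ (uTri d).1 = etaZ (d.1 + d.2.1) := by
  simp only [uTri, etaZ]
  omega

theorem three_mul_uTri_add_etaZ :
    3 * (uTri d).2.2 + etaZ (d.1 + d.2.1) = d.1 - 2 * d.2.1 - 3 * d.2.2 := by
  simp only [uTri, etaZ]
  omega

theorem tD_eq_uTri_div_two : tD d = (uTri d).2.2 / 2 := by
  have hN := three_mul_uTri_add_etaZ d
  unfold tD etaZ at *
  omega

theorem vTri_fst_sub_uTri_fst (m : ℤ) :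
    (vTri m d).1 - (uTri d).1 =
      3 * (m - 1) - d.1 + (d.1 - 2 * d.2.1 - 3 * d.2.2) / 2 - etaZ (d.1 + d.2.1) := by
  simp only [vTri, uTri, epsZ]
  omega

end uTri

theorem aprime_formula_general (m : ℤ) (d : V)
    (a c h : ℤ) (ha : a = (uTri d).1) (hc : c = (uTri d).2.2)
    (hh : h = (2 + 3 * epsZ c - etaZ a - epsZ (c + etaZ a)) / 2) :
    (vTri m d).1 - (uTri d).1 = 3 * (tD d - tauW m d.1 - 1) + h + 2 - etaZ d.1 ∧
    (h = 0 ∨ h = 1 ∨ h = 2) ∧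
    (etaZ a = 1 ∧ epsZ c = 0 → h = 0) ∧ (etaZ a = 2 ∧ epsZ c = 0 → h = 0) ∧
    (etaZ a = 0 ∧ epsZ c = 0 → h = 1) ∧ (etaZ a = 2 ∧ epsZ c = 1 → h = 1) ∧
    (etaZ a = 0 ∧ epsZ c = 1 → h = 2) ∧ (etaZ a = 1 ∧ epsZ c = 1 → h = 2) := by
  subst ha hc hh
  refine ⟨?_, hCoeff_table _ _⟩
  have hfloor := three_mul_add_div_two_sub (uTri d).2.2 (etaZ (d.1 + d.2.1))
  rw [three_mul_uTri_add_etaZ] at hfloor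
  have hτ := three_mul_tauW m d.1
  rw [vTri_fst_sub_uTri_fst, tD_eq_uTri_div_two, ← hCoeff, hCoeff_eq_div_two, etaZ_uTri_fst]
  linarith

/-- **Lemma `aprime`.** Formula for the first coordinate `a'` of the multiplier
`q^△(w,r,s) = v^△(w,r,s) - u^△(w,r,s)` in terms of `t`, `τ_w` and `h(a,c)`. -/
theorem aprime_formula (m : ℤ) (hm : 2 ≤ m) (d : V) (hd : d ∈ DText m)
    (a c h : ℤ) (ha : a = (uTri d).1) (hc : c = (uTri d).2.2)
    (hh : h = (2 + 3 * epsZ c - etaZ a - epsZ (c + etaZ a)) / 2) :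
    (vTri m d).1 - (uTri d).1 = 3 * (tD d - tauW m d.1 - 1) + h + 2 - etaZ d.1 ∧
    (h = 0 ∨ h = 1 ∨ h = 2) ∧
    (etaZ a = 1 ∧ epsZ c = 0 → h = 0) ∧ (etaZ a = 2 ∧ epsZ c = 0 → h = 0) ∧
    (etaZ a = 0 ∧ epsZ c = 0 → h = 1) ∧ (etaZ a = 2 ∧ epsZ c = 1 → h = 1) ∧
    (etaZ a = 0 ∧ epsZ c = 1 → h = 2) ∧ (etaZ a = 1 ∧ epsZ c = 1 → h = 2) :=
  aprime_formula_general m d a c h ha hc hh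
end

section
/- Fix m, n, τ ∈ ℕ with 2n+2 ≤ m. The bijections φ̂_{ℓ₀} : 𝓑 → 𝓒 for 0 ≤ ℓ₀ ≤ τ+1 all have the same multiset of multipliers, namely q_n+e₁ with multiplicity 1 and q_n and q_{n+1} each with multiplicity τ+1; in particular each φ̂_{ℓ₀} satisfies Divisibility (all multipliers have non-negative entries). Moreover, for any 0 ≤ ℓ₀, ℓ₁ ≤ τ+1, the permutation φ̂_{ℓ₁}⁻¹∘φ̂_{ℓ₀} of 𝓑 is even. -/
open Finset

/-!
`uZero l`, `uOne l`, `vZero m n l`, `vOne m n l` are the points `u⁰_l`, `u¹_l`, `v⁰_l`, `v¹_l`.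
In each case of the definition of `φ̂_k` the multiplier is `q_{n+1}`, `q_n` or `q_n + e₁`, so the
multiset comes from counting the indices `l` below, at and above `k`. The bijections `φ̂_k` and
`φ̂_{k+1}` agree except on `u⁰_k, u¹_k, u⁰_{k+1}`, where `φ̂_{k+1}⁻¹ ∘ φ̂_k` is the 3-cycle
`u⁰_k ↦ u¹_k ↦ u⁰_{k+1} ↦ u⁰_k`; so consecutive bijections differ by an even permutation, and
hence so do any two.
-/

theorem Multiset.map_range_eq_replicate {α : Type*} {f : ℕ → α} {a : α} {N : ℕ}
    (h : ∀ l < N, f l = a) : (Multiset.range N).map f = Multiset.replicate N a := by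
  rw [Multiset.eq_replicate, Multiset.card_map, Multiset.card_range]
  refine ⟨rfl, ?_⟩
  simp only [Multiset.mem_map, Multiset.mem_range]
  rintro _ ⟨l, hl, rfl⟩
  exact h l hl

section SameParity

variable {α β : Type*} [Fintype α] [DecidableEq α]

/-- For bijections `f g : α → β`: `g⁻¹ ∘ f` is an even permutation. -/
def SameParity (f g : α → β) : Prop :=
  ∃ π : Equiv.Perm α, Equiv.Perm.sign π = 1 ∧ ∀ u, g (π u) = f u

theorem SameParity.refl (f : α → β) : SameParity f f :=
  ⟨1, map_one _, fun _ => rfl⟩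

theorem SameParity.symm {f g : α → β} (h : SameParity f g) : SameParity g f := by
  obtain ⟨π, hsign, hπ⟩ := h
  refine ⟨π⁻¹, by rw [map_inv, hsign, inv_one], fun u => ?_⟩
  rw [← hπ, Equiv.Perm.coe_inv, Equiv.apply_symm_apply]

theorem SameParity.trans {f g h : α → β} (hfg : SameParity f g) (hgh : SameParity g h) :
    SameParity f h := by
  obtain ⟨π, hπsign, hπ⟩ := hfg
  obtain ⟨σ, hσsign, hσ⟩ := hgh
  exact ⟨σ * π, by rw [map_mul, hσsign, hπsign, one_mul], fun u => by
    rw [Equiv.Perm.mul_apply, hσ, hπ]⟩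

theorem sameParity_of_threeCycle {f g : α → β} {a b c : α} (hab : a ≠ b) (hbc : b ≠ c)
    (hac : a ≠ c) (ha : f a = g b) (hb : f b = g c) (hc : f c = g a)
    (hrest : ∀ u, u ≠ a → u ≠ b → u ≠ c → f u = g u) : SameParity f g := by
  refine ⟨Equiv.swap a b * Equiv.swap b c, ?_, fun u => ?_⟩
  · rw [map_mul, Equiv.Perm.sign_swap hab, Equiv.Perm.sign_swap hbc, neg_mul_neg, one_mul]
  · rw [Equiv.Perm.mul_apply]
    by_cases hua : u = a
    · subst hua
      rw [Equiv.swap_apply_of_ne_of_ne hab hac, Equiv.swap_apply_left, ha]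
    by_cases hub : u = b
    · subst hub
      rw [Equiv.swap_apply_left, Equiv.swap_apply_of_ne_of_ne hac.symm hbc.symm, hb]
    by_cases huc : u = c
    · subst huc
      rw [Equiv.swap_apply_right, Equiv.swap_apply_right, hc]
    rw [Equiv.swap_apply_of_ne_of_ne hub huc, Equiv.swap_apply_of_ne_of_ne hua hub,
      hrest u hua hub huc]

end SameParity

def uZero (l : ℕ) : V := (0, 3 * (l : ℤ), -2 * (l : ℤ))

def uOne (l : ℕ) : V := (1, 3 * (l : ℤ) + 1, -2 * (l : ℤ) - 1)

def vZero (m n : ℤ) (l : ℕ) : V := (0, 3 * (n + l), m - 2 * (n + l))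

def vOne (m n : ℤ) (l : ℕ) : V := (1, 3 * (n + l) + 1, m - 2 * (n + l) - 1)

theorem BblockF_eq (t : ℕ) :
    BblockF t = (range (t + 2)).image uZero ∪ (range (t + 1)).image uOne := rfl

theorem CblockF_eq (m n t : ℕ) :
    CblockF m n t = (Icc 1 (t + 1)).image (vZero m n) ∪ (range (t + 2)).image (vOne m n) := rfl

theorem uZero_injective : Function.Injective uZero := by
  intro a b h
  simp only [uZero, Prod.mk.injEq] at h
  omega

theorem uOne_injective : Function.Injective uOne := by
  intro a b h
  simp only [uOne, Prod.mk.injEq] at h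
  omega

theorem uZero_ne_uOne (a b : ℕ) : uZero a ≠ uOne b := by
  simp [uZero, uOne]

theorem uZero_mem_BblockF {t l : ℕ} (hl : l ≤ t + 1) : uZero l ∈ BblockF t :=
  mem_union_left _ (mem_image_of_mem _ (mem_range.2 (by omega)))

theorem uOne_mem_BblockF {t l : ℕ} (hl : l ≤ t) : uOne l ∈ BblockF t :=
  mem_union_right _ (mem_image_of_mem _ (mem_range.2 (by omega)))

theorem vZero_mem_CblockF {m n t l : ℕ} (h1 : 1 ≤ l) (h2 : l ≤ t + 1) :
    vZero m n l ∈ CblockF m n t :=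
  mem_union_left _ (mem_image_of_mem _ (mem_Icc.2 ⟨h1, h2⟩))

theorem vOne_mem_CblockF {m n t l : ℕ} (hl : l ≤ t + 1) : vOne m n l ∈ CblockF m n t :=
  mem_union_right _ (mem_image_of_mem _ (mem_range.2 (by omega)))

theorem mem_BblockF {t : ℕ} {u : V} :
    u ∈ BblockF t ↔ (∃ l ≤ t + 1, uZero l = u) ∨ ∃ l ≤ t, uOne l = u := by
  simp only [BblockF_eq, mem_union, mem_image, mem_range, Nat.lt_succ_iff]

theorem BblockF_val (t : ℕ) :
    (BblockF t).val = (Multiset.range (t + 2)).map uZero + (Multiset.range (t + 1)).map uOne := by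
  have hdisj : Disjoint ((range (t + 2)).image uZero) ((range (t + 1)).image uOne) := by
    simp only [disjoint_left, mem_image]
    rintro _ ⟨a, -, rfl⟩ ⟨b, -, h⟩
    exact uZero_ne_uOne a b h.symm
  rw [BblockF_eq, ← disjUnion_eq_union _ _ hdisj]
  exact congrArg₂ (· + ·) (image_val_of_injOn uZero_injective.injOn)
    (image_val_of_injOn uOne_injective.injOn)

theorem phiHatB_uZero (m n : ℤ) (k l : ℕ) :
    phiHatB m n k (uZero l) =
      if l < k then vZero m n (l + 1) else if l = k then vOne m n k else vZero m n l := by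
  simp only [phiHatB, uZero, vZero, vOne, Int.mul_ediv_cancel_left _ three_ne_zero]
  split_ifs <;> simp_all [add_assoc]

theorem phiHatB_uOne (m n : ℤ) (k l : ℕ) :
    phiHatB m n k (uOne l) = if l < k then vOne m n l else vOne m n (l + 1) := by
  simp only [phiHatB, uOne, vOne, add_sub_cancel_right, Int.mul_ediv_cancel_left _ three_ne_zero]
  split_ifs <;> simp_all [add_assoc]

theorem phiHatB_uZero_sub (m n : ℤ) (k l : ℕ) :
    phiHatB m n k (uZero l) - uZero l =
      if l < k then qvec m (n + 1) else if l = k then qvec m n + e1v else qvec m n := by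
  rw [phiHatB_uZero]
  split_ifs <;> ext <;> simp [uZero, vZero, vOne, qvec, e1v] <;> omega

theorem phiHatB_uOne_sub (m n : ℤ) (k l : ℕ) :
    phiHatB m n k (uOne l) - uOne l = if l < k then qvec m n else qvec m (n + 1) := by
  rw [phiHatB_uOne]
  split_ifs <;> ext <;> simp [uOne, vOne, qvec] <;> omega

theorem mapsTo_phiHatB (m n t k : ℕ) (hk : k ≤ t + 1) :
    Set.MapsTo (phiHatB m n k) (BblockF t) (CblockF m n t) := by
  intro u hu
  rcases mem_BblockF.1 hu with ⟨l, hl, rfl⟩ | ⟨l, hl, rfl⟩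
  · rw [phiHatB_uZero]
    split_ifs
    · exact vZero_mem_CblockF (by omega) (by omega)
    · exact vOne_mem_CblockF hk
    · exact vZero_mem_CblockF (by omega) hl
  · rw [phiHatB_uOne]
    split_ifs
    · exact vOne_mem_CblockF (by omega)
    · exact vOne_mem_CblockF (by omega)

theorem injOn_phiHatB (m n : ℤ) (t k : ℕ) : Set.InjOn (phiHatB m n k) (BblockF t) := by
  intro u hu u' hu' h
  rcases mem_BblockF.1 hu with ⟨l, -, rfl⟩ | ⟨l, -, rfl⟩ <;>
    rcases mem_BblockF.1 hu' with ⟨l', -, rfl⟩ | ⟨l', -, rfl⟩ <;>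
    simp only [phiHatB_uZero, phiHatB_uOne] at h <;>
    split_ifs at h <;>
    simp [uZero, uOne, vZero, vOne, Prod.ext_iff] at h ⊢ <;>
    omega

theorem surjOn_phiHatB (m n t k : ℕ) (hk : k ≤ t + 1) :
    Set.SurjOn (phiHatB m n k) (BblockF t) (CblockF m n t) := by
  intro v hv
  simp only [mem_coe, CblockF_eq, mem_union, mem_image, mem_Icc, mem_range] at hv
  rcases hv with ⟨l, hl, rfl⟩ | ⟨l, hl, rfl⟩
  · rcases le_or_gt l k with hlk | hlk
    · refine ⟨uZero (l - 1), uZero_mem_BblockF (by omega), ?_⟩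
      rw [phiHatB_uZero, if_pos (by omega), Nat.sub_add_cancel hl.1]
    · refine ⟨uZero l, uZero_mem_BblockF hl.2, ?_⟩
      rw [phiHatB_uZero, if_neg (by omega), if_neg (by omega)]
  · rcases lt_trichotomy l k with hlk | rfl | hlk
    · refine ⟨uOne l, uOne_mem_BblockF (by omega), ?_⟩
      rw [phiHatB_uOne, if_pos hlk]
    · refine ⟨uZero l, uZero_mem_BblockF (by omega), ?_⟩
      rw [phiHatB_uZero, if_neg (lt_irrefl l), if_pos rfl]
    · refine ⟨uOne (l - 1), uOne_mem_BblockF (by omega), ?_⟩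
      rw [phiHatB_uOne, if_neg (by omega), Nat.sub_add_cancel (by omega)]

theorem bijOn_phiHatB (m n t k : ℕ) (hk : k ≤ t + 1) :
    Set.BijOn (phiHatB m n k) (BblockF t) (CblockF m n t) :=
  ⟨mapsTo_phiHatB m n t k hk, injOn_phiHatB m n t k, surjOn_phiHatB m n t k hk⟩

theorem multipliers_phiHatB (m n : ℤ) (t k : ℕ) (hk : k ≤ t + 1) :
    (BblockF t).val.map (fun u => phiHatB m n k u - u) =
      (qvec m n + e1v) ::ₘ
        (Multiset.replicate (t + 1) (qvec m n) + Multiset.replicate (t + 1) (qvec m (n + 1))) := by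
  obtain ⟨j, hj⟩ := Nat.exists_eq_add_of_le hk
  have hZero : (Multiset.range (t + 2)).map (fun l => phiHatB m n k (uZero l) - uZero l) =
      Multiset.replicate k (qvec m (n + 1)) +
        (qvec m n + e1v) ::ₘ Multiset.replicate j (qvec m n) := by
    rw [show t + 2 = k + (1 + j) by omega, Multiset.range_add, Multiset.range_add,
      Multiset.map_add, Multiset.map_map, Multiset.map_add, Multiset.map_map,
      show Multiset.range 1 = {0} from rfl, Multiset.map_singleton, Multiset.singleton_add]
    congr 1
    · exact Multiset.map_range_eq_replicate fun l hl => by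
        rw [phiHatB_uZero_sub, if_pos hl]
    · congr 1
      · simp [phiHatB_uZero_sub]
      · exact Multiset.map_range_eq_replicate fun l _ => by
          simp only [Function.comp_apply, phiHatB_uZero_sub]
          rw [if_neg (by omega), if_neg (by omega)]
  have hOne : (Multiset.range (t + 1)).map (fun l => phiHatB m n k (uOne l) - uOne l) =
      Multiset.replicate k (qvec m n) + Multiset.replicate j (qvec m (n + 1)) := by
    rw [hj, Multiset.range_add, Multiset.map_add, Multiset.map_map]
    congr 1
    · exact Multiset.map_range_eq_replicate fun l hl => by
        rw [phiHatB_uOne_sub, if_pos hl]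
    · exact Multiset.map_range_eq_replicate fun l _ => by
        simp only [Function.comp_apply, phiHatB_uOne_sub]
        rw [if_neg (by omega)]
  rw [BblockF_val, Multiset.map_add, Multiset.map_map, Multiset.map_map]
  simp only [Function.comp_def]
  rw [hZero, hOne, hj, Multiset.replicate_add, Multiset.replicate_add, ← Multiset.singleton_add,
    ← Multiset.singleton_add]
  abel

theorem sameParity_phiHatB_succ (m n : ℤ) (t k : ℕ) (hk : k ≤ t) :
    SameParity (fun u : BblockF t => phiHatB m n k u)
      (fun u : BblockF t => phiHatB m n (k + 1 : ℕ) u) := by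
  refine sameParity_of_threeCycle (a := ⟨uZero k, uZero_mem_BblockF (by omega)⟩)
    (b := ⟨uOne k, uOne_mem_BblockF hk⟩) (c := ⟨uZero (k + 1), uZero_mem_BblockF (by omega)⟩)
    (Subtype.coe_ne_coe.1 (uZero_ne_uOne k k))
    (Subtype.coe_ne_coe.1 (uZero_ne_uOne (k + 1) k).symm)
    (Subtype.coe_ne_coe.1 (uZero_injective.ne (by omega))) ?_ ?_ ?_ ?_
  · simp only [phiHatB_uZero, phiHatB_uOne]
    simp
  · simp only [phiHatB_uZero, phiHatB_uOne]
    simp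
  · simp only [phiHatB_uZero]
    simp
  · rintro ⟨u, hu⟩ hua hub huc
    simp only [ne_eq, Subtype.mk.injEq] at hua hub huc
    rcases mem_BblockF.1 hu with ⟨l, -, rfl⟩ | ⟨l, -, rfl⟩
    · simp only [uZero_injective.eq_iff] at hua huc
      rw [phiHatB_uZero, phiHatB_uZero]
      split_ifs <;> first | rfl | omega
    · simp only [uOne_injective.eq_iff] at hub
      rw [phiHatB_uOne, phiHatB_uOne]
      split_ifs <;> first | rfl | omega

theorem sameParity_phiHatB (m n : ℤ) (t k₀ k₁ : ℕ) (hk₀ : k₀ ≤ t + 1) (hk₁ : k₁ ≤ t + 1) :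
    SameParity (fun u : BblockF t => phiHatB m n k₀ u)
      (fun u : BblockF t => phiHatB m n k₁ u) := by
  have from_zero : ∀ k ≤ t + 1, SameParity (fun u : BblockF t => phiHatB m n (0 : ℕ) u)
      (fun u : BblockF t => phiHatB m n k u) := by
    intro k hk
    induction k with
    | zero => exact .refl _
    | succ k ih => exact (ih (by omega)).trans (sameParity_phiHatB_succ m n t k (by omega))
  exact (from_zero k₀ hk₀).symm.trans (from_zero k₁ hk₁)

theorem nonnegV_of_mem_multipliers {m n t : ℕ} (h : 2 * n + 2 ≤ m) {x : V}
    (hx : x ∈ (qvec m n + e1v) ::ₘ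
      (Multiset.replicate (t + 1) (qvec m n) + Multiset.replicate (t + 1) (qvec m (n + 1)))) :
    nonnegV x := by
  simp only [Multiset.mem_cons, Multiset.mem_add, Multiset.mem_replicate] at hx
  rcases hx with rfl | ⟨-, rfl⟩ | ⟨-, rfl⟩ <;>
    simp only [nonnegV, qvec, e1v, Prod.fst_add, Prod.snd_add] <;> omega

/-- **Lemma `specialblockbijectionsnew`.** The bijections `φ̂_{ℓ₀} : 𝓑 → 𝓒`
all have the same multiset of multipliers (namely `q_n + e₁` once and `q_n`, `q_{n+1}` each
`τ+1` times), satisfy Divisibility, and any two of them have the same parity. -/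
theorem special_block_bijections (m n t : ℕ) (h : 2 * n + 2 ≤ m) :
    (∀ l0 : ℤ, 0 ≤ l0 → l0 ≤ (t : ℤ) + 1 →
      Set.BijOn (phiHatB m n l0) (BblockF t : Set V) (CblockF m n t : Set V) ∧
      (BblockF t).val.map (fun u => phiHatB m n l0 u - u) =
        (qvec m n + e1v) ::ₘ
          (Multiset.replicate (t + 1) (qvec m n) +
            Multiset.replicate (t + 1) (qvec m (n + 1))) ∧
      ∀ u ∈ BblockF t, nonnegV (phiHatB m n l0 u - u)) ∧
    ∀ l0 l1 : ℤ, 0 ≤ l0 → l0 ≤ (t : ℤ) + 1 → 0 ≤ l1 → l1 ≤ (t : ℤ) + 1 →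
      ∃ π : Equiv.Perm {x // x ∈ BblockF t},
        Equiv.Perm.sign π = 1 ∧
        ∀ u : {x // x ∈ BblockF t}, phiHatB m n l1 (π u : V) = phiHatB m n l0 (u : V) := by
  refine ⟨fun l0 h0 h1 => ?_, fun l0 l1 h00 h01 h10 h11 => ?_⟩
  · lift l0 to ℕ using h0
    have hmult := multipliers_phiHatB m n t l0 (by omega)
    refine ⟨bijOn_phiHatB m n t l0 (by omega), hmult, fun u hu => ?_⟩
    exact nonnegV_of_mem_multipliers h (hmult ▸ Multiset.mem_map_of_mem _ hu)
  · lift l0 to ℕ using h00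
    lift l1 to ℕ using h10
    exact sameParity_phiHatB m n t l0 l1 (by omega) (by omega)
end

section
/- Fix m, n, τ ∈ ℕ with 2n+2 ≤ m. Suppose ψ : 𝓑 ∖ {u⁰_0} → 𝓒 is an injective map such that every multiplier ψ(u)−u has non-negative entries and no multiplier ψ(u)−u is of the form q_h or q_h+e₁ with h < n. Then at least τ+1 elements u of 𝓑 ∖ {u⁰_0} satisfy ψ(u)−u = q_n. If moreover ψ extends to a bijection 𝓑 → 𝓒 still satisfying these two conditions and in which the multiplier q_n occurs with multiplicity at most τ+1, then the extension equals φ̂_{ℓ₀} for some 0 ≤ ℓ₀ ≤ τ+1. -/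
open Finset

/-!
Write the points of `𝓑` as `a • e₁ + l • e₂` and those of `𝓒` as `q_n + a • e₁ + l • e₂`, with
`a ∈ {0, 1}`. Between such points, the two conditions on a multiplier say exactly that the index
`(a, l)` can only grow in both coordinates, and the multiplier is `q_n` iff the index stays put.
The linear form `2x + y`, which equals `3 (a + l)` on `a • e₁ + l • e₂`, therefore rises by at
least `3` at every point whose multiplier is not `q_n`. As `𝓒` is `𝓑 ∖ {0}` translated by `q_n`
together with `v¹_{τ+1}`, the total rise is `3 (τ + 2)` for a bijection `𝓑 → 𝓒`, and `3 (τ + 2)`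
minus `3 (a + l) ≥ 3` of the missed point for an injection of `𝓑 ∖ {u⁰₀}`. This bounds the number
of multipliers other than `q_n` by `τ + 1`.

In the extremal case every index moves by at most one step, the first coordinate (whose total
rise is `1`) moves at exactly one point `u⁰_{ℓ₀}`, and injectivity propagates the moves along
each row, which forces `φ̂_{ℓ₀}`.
-/

theorem Finset.card_nsmul_add_card_filter_nsmul_le_sum {ι M : Type*} [AddCommMonoid M]
    [PartialOrder M] [IsOrderedAddMonoid M] (s : Finset ι) (p : ι → Prop) [DecidablePred p]
    {f : ι → M} {b c : M} (hb : ∀ i ∈ s, b ≤ f i) (hc : ∀ i ∈ s, p i → b + c ≤ f i) :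
    #s • b + #(s.filter p) • c ≤ ∑ i ∈ s, f i := by
  calc #s • b + #(s.filter p) • c = #(s.filter p) • (b + c) + #(s.filter (¬p ·)) • b := by
        rw [← card_filter_add_card_filter_not p, add_nsmul, nsmul_add]
        abel
    _ ≤ ∑ i ∈ s.filter p, f i + ∑ i ∈ s.filter (¬p ·), f i :=
        add_le_add
          (card_nsmul_le_sum _ _ _ fun i hi => hc i (mem_filter.1 hi).1 (mem_filter.1 hi).2)
          (card_nsmul_le_sum _ _ _ fun i hi => hb i (mem_filter.1 hi).1)
    _ = ∑ i ∈ s, f i := sum_filter_add_sum_filter_not s p f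

theorem Finset.disjoint_image_of_fst_ne {α α' β γ : Type*} [DecidableEq (β × γ)]
    {s : Finset α} {s' : Finset α'} {f : α → β × γ} {g : α' → β × γ}
    (h : ∀ x y, (f x).1 ≠ (g y).1) : Disjoint (s.image f) (s'.image g) := by
  simp only [disjoint_left, mem_image]
  rintro _ ⟨x, -, rfl⟩ ⟨y, -, he⟩
  exact h x y (congrArg Prod.fst he).symm

theorem Int.apply_eq_succ_of_injOn {β : Type*} {f y : ℤ → β} {i j : ℤ} (hij : i ≤ j)
    (hstep : ∀ l ∈ Set.Icc i j, f l = y l ∨ f l = y (l + 1))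
    (hinj : Set.InjOn f (Set.Icc i j)) (hi : f i = y (i + 1)) : f j = y (j + 1) := by
  induction j, hij using Int.leInduction with
  | base => exact hi
  | succ k hik ih =>
    have hk : f k = y (k + 1) :=
      ih (fun l hl => hstep l ⟨hl.1, by linarith [hl.2]⟩)
        (hinj.mono (Set.Icc_subset_Icc le_rfl (by omega)))
    rcases hstep (k + 1) ⟨by omega, le_rfl⟩ with h | h
    · have := hinj ⟨by omega, le_rfl⟩ ⟨hik, by omega⟩ (h.trans hk.symm)
      omega
    · exact h

namespace SpecialBlock

/-- `u⁰_l = bPt 0 l` and `u¹_l = bPt 1 l`. -/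
def bPt (a l : ℤ) : V := a • e1v + l • e2v

/-- `v⁰_l = cPt m n 0 l` and `v¹_l = cPt m n 1 l`, since `(0, 0, m) + n • e₂ = q_n`. -/
def cPt (m n a l : ℤ) : V := qvec m n + bPt a l

def IsBIndex (t : ℕ) (a l : ℤ) : Prop := 0 ≤ l ∧ (a = 0 ∧ l ≤ t + 1 ∨ a = 1 ∧ l ≤ t)

def IsCIndex (t : ℕ) (a l : ℤ) : Prop := (a = 0 ∧ 1 ≤ l ∨ a = 1 ∧ 0 ≤ l) ∧ l ≤ t + 1

@[simp] lemma bPt_eq (a l : ℤ) : bPt a l = (a, a + 3 * l, -a - 2 * l) := by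
  simp only [bPt, e1v, e2v, Prod.smul_mk, smul_eq_mul, Prod.mk_add_mk, Prod.ext_iff]
  omega

@[simp] lemma cPt_eq (m n a l : ℤ) :
    cPt m n a l = (a, a + 3 * (n + l), m - a - 2 * (n + l)) := by
  simp only [cPt, bPt_eq, qvec, Prod.mk_add_mk, Prod.ext_iff]
  omega

lemma bPt_inj {a l a' l' : ℤ} : bPt a l = bPt a' l' ↔ a = a' ∧ l = l' := by
  simp only [bPt_eq, Prod.ext_iff]
  omega

lemma cPt_inj {m n a l a' l' : ℤ} : cPt m n a l = cPt m n a' l' ↔ a = a' ∧ l = l' := by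
  simp only [cPt_eq, Prod.ext_iff]
  omega

lemma BblockF_eq (t : ℕ) : BblockF t =
    (range (t + 2)).image (fun l : ℕ => bPt 0 l) ∪
      (range (t + 1)).image (fun l : ℕ => bPt 1 l) := by
  simp only [BblockF, bPt_eq]
  congr 2 <;> funext l <;> simp only [Prod.ext_iff, true_and] <;> omega

lemma CblockF_eq (m n t : ℕ) : CblockF m n t =
    (Icc 1 (t + 1)).image (fun l : ℕ => cPt m n 0 l) ∪
      (range (t + 2)).image (fun l : ℕ => cPt m n 1 l) := by
  simp only [CblockF, cPt_eq]
  congr 2 <;> funext l <;> simp only [Prod.ext_iff, true_and] <;> omega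

lemma mem_BblockF {t : ℕ} {u : V} : u ∈ BblockF t ↔ ∃ a l, IsBIndex t a l ∧ bPt a l = u := by
  simp only [BblockF_eq, mem_union, mem_image, mem_range, IsBIndex]
  constructor
  · rintro (⟨l, hl, rfl⟩ | ⟨l, hl, rfl⟩)
    · exact ⟨0, l, by omega, rfl⟩
    · exact ⟨1, l, by omega, rfl⟩
  · rintro ⟨a, l, ⟨hl, ⟨rfl, hlt⟩ | ⟨rfl, hlt⟩⟩, rfl⟩ <;> lift l to ℕ using hl
    · exact Or.inl ⟨l, by omega, rfl⟩
    · exact Or.inr ⟨l, by omega, rfl⟩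

lemma mem_CblockF {m n t : ℕ} {v : V} :
    v ∈ CblockF m n t ↔ ∃ a l, IsCIndex t a l ∧ cPt m n a l = v := by
  simp only [CblockF_eq, mem_union, mem_image, mem_range, mem_Icc, IsCIndex]
  constructor
  · rintro (⟨l, hl, rfl⟩ | ⟨l, hl, rfl⟩)
    · exact ⟨0, l, by omega, rfl⟩
    · exact ⟨1, l, by omega, rfl⟩
  · rintro ⟨a, l, ⟨⟨rfl, hl⟩ | ⟨rfl, hl⟩, hlt⟩, rfl⟩
    · lift l to ℕ using (by omega)
      exact Or.inl ⟨l, by omega, rfl⟩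
    · lift l to ℕ using hl
      exact Or.inr ⟨l, by omega, rfl⟩

lemma bPt_mem_BblockF {t : ℕ} {a l : ℤ} : bPt a l ∈ BblockF t ↔ IsBIndex t a l := by
  rw [mem_BblockF]
  constructor
  · rintro ⟨a', l', h, he⟩
    obtain ⟨rfl, rfl⟩ := bPt_inj.1 he
    exact h
  · exact fun h => ⟨a, l, h, rfl⟩

lemma cPt_mem_CblockF {m n t : ℕ} {a l : ℤ} : cPt m n a l ∈ CblockF m n t ↔ IsCIndex t a l := by
  rw [mem_CblockF]
  constructor
  · rintro ⟨a', l', h, he⟩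
    obtain ⟨rfl, rfl⟩ := cPt_inj.1 he
    exact h
  · exact fun h => ⟨a, l, h, rfl⟩

lemma zero_mem_BblockF (t : ℕ) : (0 : V) ∈ BblockF t :=
  (by simp : bPt 0 0 = 0) ▸ bPt_mem_BblockF.2 ⟨le_rfl, Or.inl ⟨rfl, by positivity⟩⟩

lemma bPt_natCast_injective (a : ℤ) : Function.Injective fun l : ℕ => bPt a l :=
  fun _ _ h => by simpa using (bPt_inj.1 h).2

lemma cPt_natCast_injective (m n a : ℤ) : Function.Injective fun l : ℕ => cPt m n a l :=
  fun _ _ h => by simpa using (cPt_inj.1 h).2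

lemma card_BblockF (t : ℕ) : #(BblockF t) = 2 * t + 3 := by
  rw [BblockF_eq, card_union_of_disjoint (disjoint_image_of_fst_ne (by simp)),
    card_image_of_injective _ (bPt_natCast_injective 0),
    card_image_of_injective _ (bPt_natCast_injective 1), card_range, card_range]
  omega

lemma card_CblockF (m n t : ℕ) : #(CblockF m n t) = 2 * t + 3 := by
  rw [CblockF_eq, card_union_of_disjoint (disjoint_image_of_fst_ne (by simp)),
    card_image_of_injective _ (cPt_natCast_injective m n 0),
    card_image_of_injective _ (cPt_natCast_injective m n 1), card_range, Nat.card_Icc]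
  omega

lemma sum_CblockF (m n t : ℕ) :
    ∑ v ∈ CblockF m n t, v = ∑ u ∈ BblockF t, u + ((2 * t + 3) • qvec m n + bPt 1 (t + 1)) := by
  have hIcc : Icc 1 (t + 1) = (range (t + 2)).erase 0 := by
    ext l
    simp only [mem_Icc, mem_erase, mem_range]
    omega
  rw [CblockF_eq, BblockF_eq, sum_union (disjoint_image_of_fst_ne (by simp)),
    sum_union (disjoint_image_of_fst_ne (by simp)),
    sum_image fun _ _ _ _ h => cPt_natCast_injective m n 0 h,
    sum_image fun _ _ _ _ h => cPt_natCast_injective m n 1 h,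
    sum_image fun _ _ _ _ h => bPt_natCast_injective 0 h,
    sum_image fun _ _ _ _ h => bPt_natCast_injective 1 h, hIcc,
    sum_erase_eq_sub (mem_range.2 (by omega))]
  simp only [cPt, sum_add_distrib, sum_const, card_range, Nat.cast_zero]
  rw [sum_range_succ (fun l : ℕ => bPt 1 l) (t + 1), show bPt 0 0 = 0 by simp]
  push_cast
  module

lemma phiHatB_bPt_zero (m n l0 l : ℤ) :
    phiHatB m n l0 (bPt 0 l) = if l < l0 then cPt m n 0 (l + 1) else if l = l0 then cPt m n 1 l0
      else cPt m n 0 l := by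
  simp only [phiHatB, bPt_eq, cPt_eq, zero_add,
    Int.mul_ediv_cancel_left l (by norm_num : (3:ℤ) ≠ 0), ↓reduceIte]
  split_ifs <;> simp only [Prod.mk.injEq, true_and] <;> omega

lemma phiHatB_bPt_one (m n l0 l : ℤ) :
    phiHatB m n l0 (bPt 1 l) = if l < l0 then cPt m n 1 l else cPt m n 1 (l + 1) := by
  simp only [phiHatB, bPt_eq, cPt_eq, add_sub_cancel_left,
    Int.mul_ediv_cancel_left l (by norm_num : (3:ℤ) ≠ 0)]
  split_ifs <;> simp only [Prod.mk.injEq, true_and] <;> omega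

def IsAllowedMultiplier (m n : ℤ) (w : V) : Prop :=
  nonnegV w ∧ ∀ h : ℤ, h < n → w ≠ qvec m h ∧ w ≠ qvec m h + e1v

lemma le_of_isAllowedMultiplier {m n a l a' l' : ℤ} (ha : a = 0 ∨ a = 1) (ha' : a' = 0 ∨ a' = 1)
    (h : IsAllowedMultiplier m n (cPt m n a' l' - bPt a l)) : a ≤ a' ∧ l ≤ l' := by
  obtain ⟨⟨hfst, -, -⟩, hno⟩ := h
  simp only [cPt_eq, bPt_eq, Prod.mk_sub_mk] at hfst hno
  refine ⟨by omega, not_lt.1 fun hlt => ?_⟩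
  obtain ⟨hq, hqe⟩ := hno (n + l' - l) (by omega)
  rcases (by omega : a' = a ∨ a' = a + 1) with rfl | rfl
  · exact hq (by simp only [qvec, Prod.ext_iff]; omega)
  · exact hqe (by simp only [qvec, e1v, Prod.mk_add_mk, Prod.ext_iff]; omega)

lemma exists_of_isAllowedMultiplier {m n t : ℕ} {u v : V} (hu : u ∈ BblockF t)
    (hv : v ∈ CblockF m n t) (h : IsAllowedMultiplier m n (v - u)) :
    ∃ a l a' l', IsBIndex t a l ∧ IsCIndex t a' l' ∧ a ≤ a' ∧ l ≤ l' ∧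
      bPt a l = u ∧ cPt m n a' l' = v := by
  obtain ⟨a, l, hal, rfl⟩ := mem_BblockF.1 hu
  obtain ⟨a', l', hal', rfl⟩ := mem_CblockF.1 hv
  obtain ⟨haa, hll⟩ := le_of_isAllowedMultiplier (by unfold IsBIndex at hal; omega)
    (by unfold IsCIndex at hal'; omega) h
  exact ⟨a, l, a', l', hal, hal', haa, hll, rfl, rfl⟩

def potential : V →+ ℤ :=
  2 • AddMonoidHom.fst ℤ (ℤ × ℤ) + (AddMonoidHom.fst ℤ ℤ).comp (AddMonoidHom.snd ℤ (ℤ × ℤ))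

@[simp] lemma potential_apply (v : V) : potential v = 2 * v.1 + v.2.1 := by
  simp [potential, two_mul]

@[simp] lemma potential_qvec (m n : ℤ) : potential (qvec m n) = 3 * n := by
  simp [qvec]

@[simp] lemma potential_bPt (a l : ℤ) : potential (bPt a l) = 3 * (a + l) := by
  simp only [potential_apply, bPt_eq]
  ring

lemma potential_cPt_sub_bPt (m n a l a' l' : ℤ) :
    potential (cPt m n a' l' - bPt a l) = 3 * (n + (a' - a) + (l' - l)) := by
  simp only [potential_apply, cPt_eq, bPt_eq, Prod.mk_sub_mk]
  ring

lemma cPt_sub_bPt_eq_qvec_iff {m n a l a' l' : ℤ} :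
    cPt m n a' l' - bPt a l = qvec m n ↔ a' = a ∧ l' = l := by
  simp only [cPt_eq, bPt_eq, qvec, Prod.mk_sub_mk, Prod.ext_iff]
  omega

lemma potential_cPt_ge {m n t : ℕ} {v : V} (hv : v ∈ CblockF m n t) :
    3 * (n : ℤ) + 3 ≤ potential v := by
  obtain ⟨a, l, hal, rfl⟩ := mem_CblockF.1 hv
  unfold IsCIndex at hal
  simp only [potential_apply, cPt_eq]
  omega

lemma le_potential_sub {m n t : ℕ} {u v : V} (hu : u ∈ BblockF t) (hv : v ∈ CblockF m n t)
    (h : IsAllowedMultiplier m n (v - u)) :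
    3 * (n : ℤ) ≤ potential (v - u) ∧ (v - u ≠ qvec m n → 3 * (n : ℤ) + 3 ≤ potential (v - u)) := by
  obtain ⟨a, l, a', l', -, -, haa, hll, rfl, rfl⟩ := exists_of_isAllowedMultiplier hu hv h
  rw [potential_cPt_sub_bPt, Ne, cPt_sub_bPt_eq_qvec_iff]
  omega

lemma eq_cPt_of_potential_le {m n t : ℕ} {a l : ℤ} {v : V} (hal : IsBIndex t a l)
    (hv : v ∈ CblockF m n t) (h : IsAllowedMultiplier m n (v - bPt a l)) (hle : potential (v - bPt a l) ≤ 3 * n + 3) :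
    v = cPt m n a l ∨ v = cPt m n a (l + 1) ∨ a = 0 ∧ v = cPt m n 1 l := by
  obtain ⟨a₁, l₁, a', l', -, hal', haa, hll, he, rfl⟩ :=
    exists_of_isAllowedMultiplier (bPt_mem_BblockF.2 hal) hv h
  obtain ⟨rfl, rfl⟩ := bPt_inj.1 he
  rw [potential_cPt_sub_bPt] at hle
  simp only [cPt_inj]
  unfold IsBIndex at hal
  unfold IsCIndex at hal'
  omega

lemma exists_sum_sub_of_injOn {m n t : ℕ} {ψ : V → V}
    (hmaps : Set.MapsTo ψ ↑((BblockF t).erase 0) ↑(CblockF m n t))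
    (hinj : Set.InjOn ψ ↑((BblockF t).erase 0)) :
    ∃ y ∈ CblockF m n t,
      ∑ u ∈ (BblockF t).erase 0, (ψ u - u) = (2 * t + 3) • qvec m n + bPt 1 (t + 1) - y := by
  set D := (BblockF t).erase 0
  have himage_card : #(D.image ψ) = 2 * t + 2 := by
    rw [card_image_of_injOn hinj, card_erase_of_mem (zero_mem_BblockF t), card_BblockF]
    omega
  obtain ⟨y, hyC, hy⟩ := exists_mem_notMem_of_card_lt_card
    (s := D.image ψ) (t := CblockF m n t) (by rw [himage_card, card_CblockF]; omega)
  have himage : D.image ψ = (CblockF m n t).erase y :=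
    eq_of_subset_of_card_le (fun v hv => mem_erase.2 ⟨ne_of_mem_of_not_mem hv hy,
        by obtain ⟨u, hu, rfl⟩ := mem_image.1 hv; exact hmaps hu⟩)
      (by rw [card_erase_of_mem hyC, card_CblockF, himage_card]; omega)
  refine ⟨y, hyC, ?_⟩
  rw [sum_sub_distrib, ← sum_image (f := fun v => v) hinj, himage, sum_erase_eq_sub hyC,
    sum_CblockF, sum_erase (BblockF t) (f := fun v => v) rfl]
  abel

lemma le_card_filter_sub_eq_qvec {m n t : ℕ} {ψ : V → V}
    (hmaps : Set.MapsTo ψ ↑((BblockF t).erase 0) ↑(CblockF m n t))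
    (hinj : Set.InjOn ψ ↑((BblockF t).erase 0))
    (hall : ∀ u ∈ (BblockF t).erase 0, IsAllowedMultiplier m n (ψ u - u)) :
    t + 1 ≤ #(((BblockF t).erase 0).filter fun u => ψ u - u = qvec m n) := by
  set D := (BblockF t).erase 0
  obtain ⟨y, hyC, hsum⟩ := exists_sum_sub_of_injOn hmaps hinj
  have hcount := card_nsmul_add_card_filter_nsmul_le_sum D (fun u => ¬ψ u - u = qvec m n)
    (f := fun u => potential (ψ u - u)) (b := 3 * n) (c := 3)
    (fun u hu => (le_potential_sub (mem_of_mem_erase hu) (hmaps hu) (hall u hu)).1)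
    (fun u hu => (le_potential_sub (mem_of_mem_erase hu) (hmaps hu) (hall u hu)).2)
  rw [← map_sum, hsum, map_sub, map_add, map_nsmul, potential_qvec, potential_bPt,
    card_erase_of_mem (zero_mem_BblockF t), card_BblockF] at hcount
  have hy := potential_cPt_ge hyC
  have hsplit := card_filter_add_card_filter_not (s := D) fun u => ψ u - u = qvec m n
  rw [card_erase_of_mem (zero_mem_BblockF t), card_BblockF] at hsplit
  simp only [nsmul_eq_mul] at hcount
  push_cast at hcount
  have : (#(D.filter fun u => ¬ψ u - u = qvec m n) : ℤ) ≤ t + 1 := by linarith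
  omega

variable {m n t : ℕ} {Ψ : V → V}

lemma sum_sub_of_bijOn (hbij : Set.BijOn Ψ ↑(BblockF t) ↑(CblockF m n t)) :
    ∑ u ∈ BblockF t, (Ψ u - u) = (2 * t + 3) • qvec m n + bPt 1 (t + 1) := by
  rw [sum_sub_distrib, sum_nbij Ψ (fun u hu => hbij.mapsTo hu) hbij.injOn hbij.surjOn
    (g := fun v => v) fun _ _ => rfl, sum_CblockF]
  abel

lemma potential_sub_le_of_bijOn (hbij : Set.BijOn Ψ ↑(BblockF t) ↑(CblockF m n t))
    (hall : ∀ u ∈ BblockF t, IsAllowedMultiplier m n (Ψ u - u))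
    (hcnt : #((BblockF t).filter fun u => Ψ u - u = qvec m n) ≤ t + 1)
    {u : V} (hu : u ∈ BblockF t) : potential (Ψ u - u) ≤ 3 * n + 3 := by
  have hge := fun u hu => le_potential_sub (t := t) hu (hbij.mapsTo hu) (hall u hu)
  by_cases hq : Ψ u - u = qvec m n
  · rw [hq, potential_qvec]
    omega
  have hbad : t + 1 ≤ #(((BblockF t).erase u).filter fun v => ¬Ψ v - v = qvec m n) := by
    have := card_filter_add_card_filter_not (s := BblockF t) fun v => Ψ v - v = qvec m n
    rw [filter_erase, card_erase_of_mem (mem_filter.2 ⟨hu, hq⟩)]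
    rw [card_BblockF] at this
    omega
  have hcount := card_nsmul_add_card_filter_nsmul_le_sum ((BblockF t).erase u)
    (fun v => ¬Ψ v - v = qvec m n) (f := fun v => potential (Ψ v - v)) (b := 3 * n) (c := 3)
    (fun v hv => (hge v (mem_of_mem_erase hv)).1) (fun v hv => (hge v (mem_of_mem_erase hv)).2)
  have hsum : potential (Ψ u - u) + ∑ v ∈ (BblockF t).erase u, potential (Ψ v - v) =
      (2 * t + 3) * (3 * n) + 3 * (t + 2) := by
    rw [add_sum_erase _ (fun v => potential (Ψ v - v)) hu, ← map_sum, sum_sub_of_bijOn hbij,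
      map_add, map_nsmul, potential_qvec, potential_bPt, nsmul_eq_mul]
    push_cast
    ring
  rw [card_erase_of_mem hu, card_BblockF, nsmul_eq_mul, nsmul_eq_mul] at hcount
  push_cast at hcount
  have : (t : ℤ) + 1 ≤ #(((BblockF t).erase u).filter fun v => ¬Ψ v - v = qvec m n) := by
    exact_mod_cast hbad
  linarith

lemma exists_unique_row_change (hbij : Set.BijOn Ψ ↑(BblockF t) ↑(CblockF m n t))
    (hall : ∀ u ∈ BblockF t, IsAllowedMultiplier m n (Ψ u - u))
    (hunit : ∀ a l, IsBIndex t a l → Ψ (bPt a l) = cPt m n a l ∨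
      Ψ (bPt a l) = cPt m n a (l + 1) ∨ a = 0 ∧ Ψ (bPt a l) = cPt m n 1 l) :
    ∃ l₀, IsBIndex t 0 l₀ ∧ Ψ (bPt 0 l₀) = cPt m n 1 l₀ ∧
      ∀ u ∈ BblockF t, (Ψ u - u).1 ≠ 0 → u = bPt 0 l₀ := by
  have hsum : ∑ u ∈ BblockF t, (Ψ u - u).1 = 1 := by
    rw [← Prod.fst_sum, sum_sub_of_bijOn hbij]
    simp [qvec]
  obtain ⟨u₀, hu₀, hpos⟩ := exists_lt_of_sum_lt (s := BblockF t) (f := fun _ => (0 : ℤ))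
    (g := fun u => (Ψ u - u).1) (by rw [hsum, sum_const_zero]; exact one_pos)
  have hle := card_nsmul_add_card_filter_nsmul_le_sum (BblockF t) (fun u => (Ψ u - u).1 ≠ 0)
    (b := 0) (c := 1) (fun u hu => (hall u hu).1.1) fun u hu hne => by
      have := (hall u hu).1.1
      simp only [zero_add]
      omega
  rw [smul_zero, zero_add, nsmul_one, hsum, Nat.cast_le_one] at hle
  obtain ⟨a, l, hal, rfl⟩ := mem_BblockF.1 hu₀
  obtain ⟨rfl, hcross⟩ : a = 0 ∧ Ψ (bPt a l) = cPt m n 1 l := by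
    rcases hunit a l hal with h | h | h
    · rw [h] at hpos
      simp at hpos
    · rw [h] at hpos
      simp at hpos
    · exact h
  exact ⟨l, hal, hcross, fun u hu hne => card_le_one.1 hle _ (mem_filter.2 ⟨hu, hne⟩) _
    (mem_filter.2 ⟨hu₀, hpos.ne'⟩)⟩

lemma apply_bPt_eq_succ (hinj : Set.InjOn Ψ ↑(BblockF t)) {a i j : ℤ} (hij : i ≤ j)
    (hrow : ∀ l ∈ Set.Icc i j, IsBIndex t a l ∧
      (Ψ (bPt a l) = cPt m n a l ∨ Ψ (bPt a l) = cPt m n a (l + 1)))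
    (hi : Ψ (bPt a i) = cPt m n a (i + 1)) : Ψ (bPt a j) = cPt m n a (j + 1) :=
  Int.apply_eq_succ_of_injOn (f := fun l => Ψ (bPt a l)) hij (fun l hl => (hrow l hl).2)
    (fun l hl l' hl' h => (bPt_inj.1 (hinj (bPt_mem_BblockF.2 (hrow l hl).1)
      (bPt_mem_BblockF.2 (hrow l' hl').1) h)).2) hi

/-- Below `l₀` the row is pushed up, since `u⁰₀` cannot stay (`v⁰₀ ∉ 𝓒`); above `l₀` it stays,
since `u⁰_{τ+1}` cannot move up. -/
lemma apply_bPt_zero (hmaps : ∀ u ∈ BblockF t, Ψ u ∈ CblockF m n t)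
    (hinj : Set.InjOn Ψ ↑(BblockF t)) {l₀ : ℤ} (hcross : Ψ (bPt 0 l₀) = cPt m n 1 l₀)
    (hrow : ∀ a l, IsBIndex t a l → bPt a l ≠ bPt 0 l₀ →
      Ψ (bPt a l) = cPt m n a l ∨ Ψ (bPt a l) = cPt m n a (l + 1))
    {l : ℤ} (hl : IsBIndex t 0 l) :
    Ψ (bPt 0 l) = if l < l₀ then cPt m n 0 (l + 1) else if l = l₀ then cPt m n 1 l₀
      else cPt m n 0 l := by
  unfold IsBIndex at hl
  have hrow₀ : ∀ l' ∈ Set.Icc 0 (t + 1 : ℤ), l' ≠ l₀ →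
      IsBIndex t 0 l' ∧ (Ψ (bPt 0 l') = cPt m n 0 l' ∨ Ψ (bPt 0 l') = cPt m n 0 (l' + 1)) :=
    fun l' ⟨h0, h1⟩ hne => ⟨⟨h0, .inl ⟨rfl, h1⟩⟩, hrow 0 l' ⟨h0, .inl ⟨rfl, h1⟩⟩
      fun h => hne (bPt_inj.1 h).2⟩
  have hindex : ∀ l' ∈ Set.Icc 0 (t + 1 : ℤ), ∀ l'', Ψ (bPt 0 l') = cPt m n 0 l'' →
      1 ≤ l'' ∧ l'' ≤ t + 1 := fun l' ⟨h0, h1⟩ l'' h => by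
    have := cPt_mem_CblockF.1 (h ▸ hmaps _ (bPt_mem_BblockF.2 ⟨h0, .inl ⟨rfl, h1⟩⟩))
    unfold IsCIndex at this
    omega
  split_ifs with hlt heq
  · have h0 : Ψ (bPt 0 0) = cPt m n 0 (0 + 1) :=
      (hrow₀ 0 ⟨le_rfl, by omega⟩ (by omega)).2.resolve_left fun h => by
        have := hindex 0 ⟨le_rfl, by omega⟩ 0 h
        omega
    exact apply_bPt_eq_succ hinj hl.1
      (fun l' ⟨h0, h1⟩ => hrow₀ l' ⟨h0, by omega⟩ (by omega)) h0
  · rw [heq, hcross]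
  · refine (hrow₀ l ⟨hl.1, by omega⟩ heq).2.resolve_right fun h => ?_
    have htop := apply_bPt_eq_succ hinj (j := t + 1) (by omega)
      (fun l' ⟨h0, h1⟩ => hrow₀ l' ⟨by omega, h1⟩ (by omega)) h
    have := hindex (t + 1) ⟨by omega, le_rfl⟩ _ htop
    omega

/-- Nothing in the row may reach `v¹_{l₀}`, the image of `u⁰_{l₀}`: this keeps the row fixed below
`l₀` and pushes it up from `l₀` on. -/
lemma apply_bPt_one (hinj : Set.InjOn Ψ ↑(BblockF t)) {l₀ : ℤ} (hl₀ : IsBIndex t 0 l₀)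
    (hcross : Ψ (bPt 0 l₀) = cPt m n 1 l₀)
    (hrow : ∀ a l, IsBIndex t a l → bPt a l ≠ bPt 0 l₀ →
      Ψ (bPt a l) = cPt m n a l ∨ Ψ (bPt a l) = cPt m n a (l + 1))
    {l : ℤ} (hl : IsBIndex t 1 l) :
    Ψ (bPt 1 l) = if l < l₀ then cPt m n 1 l else cPt m n 1 (l + 1) := by
  unfold IsBIndex at hl hl₀
  have hrow₁ : ∀ l' ∈ Set.Icc 0 (t : ℤ),
      IsBIndex t 1 l' ∧ (Ψ (bPt 1 l') = cPt m n 1 l' ∨ Ψ (bPt 1 l') = cPt m n 1 (l' + 1)) :=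
    fun l' ⟨h0, h1⟩ => ⟨⟨h0, .inr ⟨rfl, h1⟩⟩, hrow 1 l' ⟨h0, .inr ⟨rfl, h1⟩⟩
      fun h => one_ne_zero (bPt_inj.1 h).1⟩
  have hne : ∀ l' ∈ Set.Icc 0 (t : ℤ), Ψ (bPt 1 l') ≠ cPt m n 1 l₀ := fun l' hl' h =>
    one_ne_zero (bPt_inj.1 (hinj (bPt_mem_BblockF.2 (hrow₁ l' hl').1)
      (bPt_mem_BblockF.2 ⟨hl₀.1, .inl ⟨rfl, by omega⟩⟩) (h.trans hcross.symm))).1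
  split_ifs with hlt
  · refine (hrow₁ l ⟨hl.1, by omega⟩).2.resolve_right fun h => hne (l₀ - 1) ⟨by omega, by omega⟩ ?_
    simpa using apply_bPt_eq_succ hinj (j := l₀ - 1) (by omega)
      (fun l' ⟨h0, h1⟩ => hrow₁ l' ⟨by omega, by omega⟩) h
  · have h0 : Ψ (bPt 1 l₀) = cPt m n 1 (l₀ + 1) :=
      (hrow₁ l₀ ⟨hl₀.1, by omega⟩).2.resolve_left (hne l₀ ⟨hl₀.1, by omega⟩)
    exact apply_bPt_eq_succ hinj (i := l₀) (by omega)
      (fun l' ⟨h0, h1⟩ => hrow₁ l' ⟨by omega, by omega⟩) h0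

lemma eq_phiHatB_of_bijOn (hbij : Set.BijOn Ψ ↑(BblockF t) ↑(CblockF m n t))
    (hall : ∀ u ∈ BblockF t, IsAllowedMultiplier m n (Ψ u - u))
    (hcnt : #((BblockF t).filter fun u => Ψ u - u = qvec m n) ≤ t + 1) :
    ∃ l₀ : ℤ, 0 ≤ l₀ ∧ l₀ ≤ t + 1 ∧ ∀ u ∈ BblockF t, Ψ u = phiHatB m n l₀ u := by
  have hunit : ∀ a l, IsBIndex t a l → Ψ (bPt a l) = cPt m n a l ∨
      Ψ (bPt a l) = cPt m n a (l + 1) ∨ a = 0 ∧ Ψ (bPt a l) = cPt m n 1 l := fun a l hal =>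
    have hu := bPt_mem_BblockF.2 hal
    eq_cPt_of_potential_le hal (hbij.mapsTo hu) (hall _ hu)
      (potential_sub_le_of_bijOn hbij hall hcnt hu)
  obtain ⟨l₀, hl₀, hcross, huniq⟩ := exists_unique_row_change hbij hall hunit
  have hrow : ∀ a l, IsBIndex t a l → bPt a l ≠ bPt 0 l₀ →
      Ψ (bPt a l) = cPt m n a l ∨ Ψ (bPt a l) = cPt m n a (l + 1) := fun a l hal hne => by
    rcases hunit a l hal with h | h | ⟨rfl, h⟩
    · exact .inl h
    · exact .inr h
    · exact absurd (huniq _ (bPt_mem_BblockF.2 hal) (by rw [h]; simp)) hne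
  refine ⟨l₀, hl₀.1, by unfold IsBIndex at hl₀; omega, fun u hu => ?_⟩
  obtain ⟨a, l, hal, rfl⟩ := mem_BblockF.1 hu
  obtain ⟨-, ⟨rfl, -⟩ | ⟨rfl, -⟩⟩ := id hal
  · rw [phiHatB_bPt_zero]
    exact apply_bPt_zero (fun u hu => hbij.mapsTo hu) hbij.injOn hcross hrow hal
  · rw [phiHatB_bPt_one]
    exact apply_bPt_one hbij.injOn hl₀ hcross hrow hal

end SpecialBlock

theorem special_block_rigidity_general (m n t : ℕ) (ψ : V → V)
    (hmaps : Set.MapsTo ψ ((BblockF t : Set V) \ {((0, 0, 0) : V)}) (CblockF m n t : Set V))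
    (hinj : Set.InjOn ψ ((BblockF t : Set V) \ {((0, 0, 0) : V)}))
    (hdiv : ∀ u ∈ (BblockF t : Set V) \ {((0, 0, 0) : V)}, nonnegV (ψ u - u))
    (hno : ∀ u ∈ (BblockF t : Set V) \ {((0, 0, 0) : V)}, ∀ h' : ℤ, h' < (n : ℤ) →
      ψ u - u ≠ qvec m h' ∧ ψ u - u ≠ qvec m h' + e1v) :
    (t + 1 ≤ (((BblockF t).erase ((0, 0, 0) : V)).filter
      (fun u => ψ u - u = qvec m n)).card) ∧
    ∀ Ψ : V → V, Set.BijOn Ψ (BblockF t : Set V) (CblockF m n t : Set V) →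
      (∀ u ∈ (BblockF t : Set V) \ {((0, 0, 0) : V)}, Ψ u = ψ u) →
      (∀ u ∈ BblockF t, nonnegV (Ψ u - u)) →
      (∀ u ∈ BblockF t, ∀ h' : ℤ, h' < (n : ℤ) →
        Ψ u - u ≠ qvec m h' ∧ Ψ u - u ≠ qvec m h' + e1v) →
      ((BblockF t).filter (fun u => Ψ u - u = qvec m n)).card ≤ t + 1 →
      ∃ l0 : ℤ, 0 ≤ l0 ∧ l0 ≤ (t : ℤ) + 1 ∧ ∀ u ∈ BblockF t, Ψ u = phiHatB m n l0 u := by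
  rw [← coe_erase] at hmaps hinj hdiv hno
  refine ⟨SpecialBlock.le_card_filter_sub_eq_qvec hmaps hinj fun u hu => ⟨hdiv u hu, hno u hu⟩, ?_⟩
  intro Ψ hbij _ hdivΨ hnoΨ hcnt
  exact SpecialBlock.eq_phiHatB_of_bijOn hbij (fun u hu => ⟨hdivΨ u hu, hnoΨ u hu⟩) hcnt

/-- **Lemma `cabninjetive`.** Rigidity of injections `𝓑 ∖ {u⁰₀} → 𝓒`
satisfying Divisibility and avoiding multipliers `q_h`, `q_h + e₁` with `h < n`. -/
theorem special_block_rigidity (m n t : ℕ) (h : 2 * n + 2 ≤ m) (ψ : V → V)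
    (hmaps : Set.MapsTo ψ ((BblockF t : Set V) \ {((0, 0, 0) : V)}) (CblockF m n t : Set V))
    (hinj : Set.InjOn ψ ((BblockF t : Set V) \ {((0, 0, 0) : V)}))
    (hdiv : ∀ u ∈ (BblockF t : Set V) \ {((0, 0, 0) : V)}, nonnegV (ψ u - u))
    (hno : ∀ u ∈ (BblockF t : Set V) \ {((0, 0, 0) : V)}, ∀ h' : ℤ, h' < (n : ℤ) →
      ψ u - u ≠ qvec m h' ∧ ψ u - u ≠ qvec m h' + e1v) :
    (t + 1 ≤ (((BblockF t).erase ((0, 0, 0) : V)).filter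
      (fun u => ψ u - u = qvec m n)).card) ∧
    ∀ Ψ : V → V, Set.BijOn Ψ (BblockF t : Set V) (CblockF m n t : Set V) →
      (∀ u ∈ (BblockF t : Set V) \ {((0, 0, 0) : V)}, Ψ u = ψ u) →
      (∀ u ∈ BblockF t, nonnegV (Ψ u - u)) →
      (∀ u ∈ BblockF t, ∀ h' : ℤ, h' < (n : ℤ) →
        Ψ u - u ≠ qvec m h' ∧ Ψ u - u ≠ qvec m h' + e1v) →
      ((BblockF t).filter (fun u => Ψ u - u = qvec m n)).card ≤ t + 1 →
      ∃ l0 : ℤ, 0 ≤ l0 ∧ l0 ≤ (t : ℤ) + 1 ∧ ∀ u ∈ BblockF t, Ψ u = phiHatB m n l0 u :=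
  special_block_rigidity_general m n t ψ hmaps hinj hdiv hno
end
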